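/- arXiv:2202.01716 — 10 statements merged into one kernel-verified Lean document; each statement's English description precedes it below -/
import Mathlib

section
/- For identical additive valuations, if a sub-allocation π' of an initial allocation π is EF1, then there exists a sub-allocation π'' of π that is EF1, satisfies π'(a) ⊆ π''(a) for every agent a, gives every agent of minimum utility in π its full initial bundle (π''(a) = π(a)), and in which every agent not of minimum utility in π has utility at least as large as the minimum utility of π. -/
/-- For identical additive valuations, every EF1 sub-allocation π' of π can be extended
to an EF1 sub-allocation π'' of π giving every minimum-utility agent its full initial
bundle, and every other agent utility at least the minimum utility of π. -/
theorem stmt2 {A R : Type*} [Fintype A] [Nonempty A] [DecidableEq R]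
    (u : R → ℕ) (π π' : A → Finset R)
    (hdisj : ∀ a b : A, a ≠ b → Disjoint (π a) (π b))
    (hsub : ∀ a, π' a ⊆ π a)
    (hEF1 : ∀ a b : A, a ≠ b →
      ¬ ((π' b).Nonempty ∧ ∀ r ∈ π' b, (π' a).sum u < ((π' b).erase r).sum u)) :
    ∃ π'' : A → Finset R,
      (∀ a, π'' a ⊆ π a) ∧
      (∀ a, π' a ⊆ π'' a) ∧
      (∀ a b : A, a ≠ b →
        ¬ ((π'' b).Nonempty ∧ ∀ r ∈ π'' b, (π'' a).sum u < ((π'' b).erase r).sum u)) ∧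
      (∀ a : A, (∀ b : A, (π a).sum u ≤ (π b).sum u) → π'' a = π a) ∧
      (∀ a : A, ¬ (∀ b : A, (π a).sum u ≤ (π b).sum u) →
        Finset.univ.inf' Finset.univ_nonempty (fun b : A => (π b).sum u) ≤ (π'' a).sum u) := by
  classical
  set m := Finset.univ.inf' Finset.univ_nonempty (fun b : A => (π b).sum u) with hm
  have hmle : ∀ a : A, m ≤ (π a).sum u := fun a => Finset.inf'_le _ (Finset.mem_univ a)
  have key : ∀ n (q : A → Finset R), (∑ a, ((π a) \ (q a)).card) ≤ n →
      (∀ a, q a ⊆ π a) →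
      (∀ a b : A, a ≠ b → ¬ ((q b).Nonempty ∧ ∀ r ∈ q b, (q a).sum u < ((q b).erase r).sum u)) →
      ∃ π'' : A → Finset R,
        (∀ a, π'' a ⊆ π a) ∧ (∀ a, q a ⊆ π'' a) ∧
        (∀ a b : A, a ≠ b →
          ¬ ((π'' b).Nonempty ∧ ∀ r ∈ π'' b, (π'' a).sum u < ((π'' b).erase r).sum u)) ∧
        (∀ a : A, (∀ b : A, (π a).sum u ≤ (π b).sum u) → π'' a = π a) ∧
        (∀ a : A, ¬ (∀ b : A, (π a).sum u ≤ (π b).sum u) → m ≤ (π'' a).sum u) := by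
    intro n
    induction n with
    | zero =>
      intro q hcard hq hqEF1
      have hq' : ∀ a, q a = π a := by
        intro a
        have h0 : ((π a) \ (q a)).card = 0 :=
          Nat.eq_zero_of_le_zero (le_trans
            (Finset.single_le_sum (f := fun a => ((π a) \ (q a)).card)
              (fun i _ => Nat.zero_le _) (Finset.mem_univ a)) hcard)
        have hd : π a \ q a = ∅ := Finset.card_eq_zero.mp h0
        apply Finset.Subset.antisymm (hq a)
        intro r hr
        by_contra hrq
        have : r ∈ π a \ q a := Finset.mem_sdiff.mpr ⟨hr, hrq⟩
        simp [hd] at this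
      exact ⟨q, hq, fun a => Finset.Subset.refl _, hqEF1, fun a _ => hq' a,
        fun a _ => by rw [hq' a]; exact hmle a⟩
    | succ n ih =>
      intro q hcard hq hqEF1
      by_cases hU : ∃ a : A, ((∀ b : A, (π a).sum u ≤ (π b).sum u) ∧ q a ≠ π a) ∨ (q a).sum u < m
      · obtain ⟨a0, ha0⟩ := hU
        have hle : (q a0).sum u ≤ m := by
          rcases ha0 with ⟨hmin, _⟩ | hlt
          · calc (q a0).sum u ≤ (π a0).sum u := Finset.sum_le_sum_of_subset (hq a0)
              _ ≤ m := Finset.le_inf' _ _ (fun b _ => hmin b)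
          · exact le_of_lt hlt
        obtain ⟨amin, -, hamin⟩ := Finset.exists_min_image Finset.univ
          (fun b => (q b).sum u) Finset.univ_nonempty
        have hamin' : ∀ b : A, (q amin).sum u ≤ (q b).sum u := fun b => hamin b (Finset.mem_univ b)
        have hex : ∃ a : A, (((∀ b : A, (π a).sum u ≤ (π b).sum u) ∧ q a ≠ π a) ∨ (q a).sum u < m)
            ∧ ∀ b : A, (q a).sum u ≤ (q b).sum u := by
          by_cases hUm : ((∀ b : A, (π amin).sum u ≤ (π b).sum u) ∧ q amin ≠ π amin)
              ∨ (q amin).sum u < m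
          · exact ⟨amin, hUm, hamin'⟩
          · push_neg at hUm
            have h1 : m ≤ (q amin).sum u := hUm.2
            have h2 : (q a0).sum u = (q amin).sum u :=
              le_antisymm (le_trans hle h1) (hamin' a0)
            exact ⟨a0, ha0, fun b => h2 ▸ hamin' b⟩
        obtain ⟨a, haU, haglob⟩ := hex
        have hne : q a ≠ π a := by
          rcases haU with ⟨_, h⟩ | hlt
          · exact h
          · intro h; rw [h] at hlt; exact absurd (hmle a) (not_le.mpr hlt)
        have hdne : (π a \ q a).Nonempty := by
          rw [Finset.sdiff_nonempty]
          intro hss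
          exact hne (Finset.Subset.antisymm (hq a) hss)
        obtain ⟨r, hr⟩ := hdne
        have hrπ : r ∈ π a := (Finset.mem_sdiff.mp hr).1
        have hrq : r ∉ q a := (Finset.mem_sdiff.mp hr).2
        set q₂ := Function.update q a (insert r (q a)) with hq₂
        have hq₂a : q₂ a = insert r (q a) := by simp [hq₂]
        have hq₂b : ∀ b : A, b ≠ a → q₂ b = q b := by
          intro b hb; simp [hq₂, Function.update_of_ne hb]
        have hext : ∀ b, q b ⊆ q₂ b := by
          intro b
          by_cases hb : b = a
          · rw [hb, hq₂a]; exact Finset.subset_insert _ _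
          · rw [hq₂b b hb]
        have hq₂sub : ∀ b, q₂ b ⊆ π b := by
          intro b
          by_cases hb : b = a
          · rw [hb, hq₂a]; exact Finset.insert_subset hrπ (hq a)
          · rw [hq₂b b hb]; exact hq b
        have hEF2 : ∀ b c : A, b ≠ c →
            ¬ ((q₂ c).Nonempty ∧ ∀ r' ∈ q₂ c, (q₂ b).sum u < ((q₂ c).erase r').sum u) := by
          intro b c hbc
          rintro ⟨hcne, hall⟩
          by_cases hca : c = a
          · have hba : b ≠ a := hca ▸ hbc
            have hlt := hall r (by rw [hca, hq₂a]; exact Finset.mem_insert_self _ _)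
            rw [hca, hq₂a, Finset.erase_insert hrq, hq₂b b hba] at hlt
            exact absurd (haglob b) (not_le.mpr hlt)
          · have hqc : q₂ c = q c := hq₂b c hca
            apply hqEF1 b c hbc
            refine ⟨by rwa [hqc] at hcne, fun r' hr' => ?_⟩
            have hlt := hall r' (by rwa [hqc])
            rw [hqc] at hlt
            exact lt_of_le_of_lt (Finset.sum_le_sum_of_subset (hext b)) hlt
        have hcard2 : (∑ b, ((π b) \ (q₂ b)).card) ≤ n := by
          have hsplit : ∀ (f : A → ℕ), (∑ b, f b) = f a + ∑ b ∈ Finset.univ.erase a, f b := by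
            intro f
            rw [Finset.add_sum_erase _ f (Finset.mem_univ a)]
          have heq : π a \ q₂ a = (π a \ q a).erase r := by
            rw [hq₂a]
            ext x
            simp only [Finset.mem_sdiff, Finset.mem_erase, Finset.mem_insert]
            tauto
          have hrest : ∀ b ∈ Finset.univ.erase a, (π b \ q₂ b).card = (π b \ q b).card := by
            intro b hb
            rw [hq₂b b (Finset.ne_of_mem_erase hb)]
          have hc1 : (π a \ q₂ a).card = (π a \ q a).card - 1 := by
            rw [heq, Finset.card_erase_of_mem hr]
          have hpos : 1 ≤ (π a \ q a).card := Finset.card_pos.mpr ⟨r, hr⟩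
          rw [hsplit (fun b => (π b \ q₂ b).card)]
          rw [Finset.sum_congr rfl hrest, hc1]
          rw [hsplit (fun b => (π b \ q b).card)] at hcard
          omega
        obtain ⟨π'', h1, h2, h3, h4, h5⟩ := ih q₂ hcard2 hq₂sub hEF2
        exact ⟨π'', h1, fun b => (hext b).trans (h2 b), h3, h4, h5⟩
      · push_neg at hU
        exact ⟨q, hq, fun a => Finset.Subset.refl _, hqEF1,
          fun a hmin => (hU a).1 hmin, fun a _ => (hU a).2⟩
  exact key _ π' le_rfl hsub hEF1
end

section
/- For identical additive valuations with all resources having positive utility, the empty allocation can always be turned into an EF1 allocation in which every agent of minimum initial utility keeps its full bundle: formally, the sub-allocation π' of π defined by π'(a) = π(a) for every agent a of minimum utility in π and π'(a) obtained from π(a) by greedily deleting the most valuable resources until a is no longer envied up to one good by a minimum-utility agent, is EF1. -/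
/-- Greedy deletion of most valuable resources from envied agents' bundles (minimum
utility agents keeping their full bundles) yields an EF1 allocation. -/
theorem stmt3 {A R : Type*} [Fintype A] [Nonempty A] [DecidableEq R]
    (u : R → ℕ) (hu : ∀ r : R, 1 ≤ u r)
    (π : A → Finset R)
    (hdisj : ∀ a b : A, a ≠ b → Disjoint (π a) (π b))
    (u0 : ℕ) (hu0 : u0 = Finset.univ.inf' Finset.univ_nonempty (fun a : A => (π a).sum u))
    (π' : A → Finset R)
    (hsub : ∀ a, π' a ⊆ π a)
    -- minimum-utility agents keep their full bundle
    (hmin : ∀ a : A, (π a).sum u = u0 → π' a = π a)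
    -- deleted resources are at least as valuable as kept ones (greedy order)
    (hgreedy : ∀ a : A, ∀ r ∈ π a \ π' a, ∀ r' ∈ π' a, u r' ≤ u r)
    -- after deletion, a is no longer envied up to one good by a minimum-utility agent
    (hstop : ∀ a : A,
      ¬ ((π' a).Nonempty ∧ ∀ r ∈ π' a, u0 < ((π' a).erase r).sum u))
    -- greedy stopping condition: putting back the least valuable deleted resource
    -- would leave a still envied up to one good by a minimum-utility agent
    (hneed : ∀ a : A, (π a \ π' a).Nonempty →
      ∃ r ∈ π a \ π' a, (∀ r' ∈ π a \ π' a, u r ≤ u r') ∧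
        ((insert r (π' a)).Nonempty ∧
          ∀ r'' ∈ insert r (π' a), u0 < ((insert r (π' a)).erase r'').sum u)) :
    ∀ a b : A, a ≠ b →
      ¬ ((π' b).Nonempty ∧ ∀ r ∈ π' b, (π' a).sum u < ((π' b).erase r).sum u) := by
  intro a b hab h
  have hge : u0 ≤ (π' a).sum u := by
    by_cases hd : (π a \ π' a).Nonempty
    · obtain ⟨r, hr, _, _, hall⟩ := hneed a hd
      have hrn : r ∉ π' a := (Finset.mem_sdiff.mp hr).2
      have := hall r (Finset.mem_insert_self r _)
      rw [Finset.erase_insert hrn] at this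
      exact this.le
    · have : π' a = π a := by
        apply Finset.eq_of_subset_of_card_le (hsub a)
        have : π a \ π' a = ∅ := Finset.not_nonempty_iff_eq_empty.mp hd
        have hsub2 : π a ⊆ π' a := by
          intro x hx
          by_contra hx'
          exact absurd (Finset.mem_sdiff.mpr ⟨hx, hx'⟩) (by simp [this])
        exact Finset.card_le_card hsub2
      rw [this, hu0]
      exact Finset.inf'_le _ (Finset.mem_univ a)
  exact hstop b ⟨h.1, fun r hr => lt_of_le_of_lt hge (h.2 r hr)⟩
end

section
/- For identical additive valuations, the greedy deletion of most-valuable resources is optimal in the following sense: let a be an agent envied up to one good by a minimum-utility agent in π, and let s be the minimum number of resources that must be removed from π(a) greedily (always removing a most-valuable remaining resource) to make a no longer envied up to one good by a minimum-utility agent. Then every set P ⊆ π(a) whose removal makes a no longer envied up to one good by a minimum-utility agent satisfies |P| ≥ s. -/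
/-- If every element of `T \ S` has value at most every element of `S \ T`, and
`T.card ≤ S.card`, then the total value of `T` is at most that of `S`. -/
lemma aux_sum_le {R : Type*} [DecidableEq R] (u : R → ℕ) (S T : Finset R)
    (h : ∀ y ∈ T \ S, ∀ x ∈ S \ T, u y ≤ u x) (hc : T.card ≤ S.card) :
    T.sum u ≤ S.sum u := by
  have hT : (T ∩ S).sum u + (T \ S).sum u = T.sum u := Finset.sum_inter_add_sum_sdiff T S u
  have hS : (S ∩ T).sum u + (S \ T).sum u = S.sum u := Finset.sum_inter_add_sum_sdiff S T u
  have hTc : (T ∩ S).card + (T \ S).card = T.card := Finset.card_inter_add_card_sdiff T S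
  have hSc : (S ∩ T).card + (S \ T).card = S.card := Finset.card_inter_add_card_sdiff S T
  rw [Finset.inter_comm] at hS hSc
  have hcard : (T \ S).card ≤ (S \ T).card := by omega
  have key : (T \ S).sum u ≤ (S \ T).sum u := by
    rcases (T \ S).eq_empty_or_nonempty with he | hne
    · simp [he]
    · have hSTne : (S \ T).Nonempty := by
        rw [← Finset.card_pos]
        have := Finset.card_pos.mpr hne
        omega
      obtain ⟨m, hm, hmin⟩ := Finset.exists_min_image (S \ T) u hSTne
      calc (T \ S).sum u ≤ (T \ S).card • u m :=
            Finset.sum_le_card_nsmul _ _ _ (fun y hy => h y hy m hm)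
        _ ≤ (S \ T).card • u m := by
            simp only [smul_eq_mul]; exact Nat.mul_le_mul_right _ hcard
        _ ≤ (S \ T).sum u := Finset.card_nsmul_le_sum _ _ _ hmin
  omega

/-- Greedy removal of most valuable resources is optimal: any set P whose removal makes
agent a no longer envied up to one good by a minimum-utility agent has |P| ≥ |Pg|,
where Pg is the greedily removed set. -/
theorem stmt4 {A R : Type*} [Fintype A] [Nonempty A] [DecidableEq R]
    (u : R → ℕ) (π : A → Finset R)
    (hdisj : ∀ a b : A, a ≠ b → Disjoint (π a) (π b))
    (u0 : ℕ) (hu0 : u0 = Finset.univ.inf' Finset.univ_nonempty (fun a : A => (π a).sum u))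
    (a : A)
    -- a is envied up to one good by a minimum-utility agent
    (henvied : (π a).Nonempty ∧ ∀ r ∈ π a, u0 < ((π a).erase r).sum u)
    (Pg : Finset R) (hPgsub : Pg ⊆ π a)
    -- Pg consists of most valuable resources (greedy order)
    (hgreedy : ∀ r ∈ Pg, ∀ r' ∈ π a \ Pg, u r' ≤ u r)
    -- after removing Pg, a is no longer envied up to one good by a minimum-utility agent
    (hdone : ¬ ((π a \ Pg).Nonempty ∧ ∀ r ∈ π a \ Pg, u0 < ((π a \ Pg).erase r).sum u))
    -- stopping condition: putting back the least valuable removed resource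
    -- leaves a still envied up to one good by a minimum-utility agent
    (hstop : Pg.Nonempty → ∃ r ∈ Pg, (∀ r' ∈ Pg, u r ≤ u r') ∧
      ((insert r (π a \ Pg)).Nonempty ∧
        ∀ r'' ∈ insert r (π a \ Pg), u0 < ((insert r (π a \ Pg)).erase r'').sum u)) :
    ∀ P ⊆ π a,
      ¬ ((π a \ P).Nonempty ∧ ∀ r ∈ π a \ P, u0 < ((π a \ P).erase r).sum u) →
      Pg.card ≤ P.card := by
  intro P hPsub hP
  by_contra hlt
  push_neg at hlt
  apply hP
  -- Pg is nonempty
  have hPgne : Pg.Nonempty := by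
    rw [← Finset.card_pos]; omega
  obtain ⟨r, hrPg, hrmin, hBne, hB⟩ := hstop hPgne
  have hrnot : r ∉ π a \ Pg := by
    simp only [Finset.mem_sdiff]
    exact fun ⟨_, h2⟩ => h2 hrPg
  -- u0 < sum (π a \ Pg)
  have hkey : u0 < (π a \ Pg).sum u := by
    have := hB r (Finset.mem_insert_self r _)
    rwa [Finset.erase_insert hrnot] at this
  have hPgc : Pg.card ≤ (π a).card := Finset.card_le_card hPgsub
  have hPc : P.card ≤ (π a).card := Finset.card_le_card hPsub
  have hcdPg : (π a \ Pg).card = (π a).card - Pg.card := Finset.card_sdiff_of_subset hPgsub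
  have hcdP : (π a \ P).card = (π a).card - P.card := Finset.card_sdiff_of_subset hPsub
  constructor
  · rw [← Finset.card_pos]; omega
  · intro r'' hr''
    set S := (π a \ P).erase r'' with hSdef
    have hSsub : S ⊆ π a := by
      intro x hx
      have := Finset.erase_subset r'' (π a \ P) hx
      exact (Finset.mem_sdiff.mp this).1
    have hScard : S.card = (π a \ P).card - 1 := Finset.card_erase_of_mem hr''
    have hcle : (π a \ Pg).card ≤ S.card := by omega
    have hle : (π a \ Pg).sum u ≤ S.sum u := by
      apply aux_sum_le u S (π a \ Pg) _ hcle
      intro y hy x hx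
      have hy' : y ∈ π a \ Pg := (Finset.mem_sdiff.mp hy).1
      have hx1 : x ∈ π a := hSsub (Finset.mem_sdiff.mp hx).1
      have hx2 : x ∈ Pg := by
        by_contra hxn
        exact (Finset.mem_sdiff.mp hx).2 (Finset.mem_sdiff.mpr ⟨hx1, hxn⟩)
      exact hgreedy x hx2 y hy'
    omega
end

section
/- EF By Donating Goods with two agents and identical valuations encodes Subset Sum: given positive integers x₁,…,x_ν and target S, construct the instance where agent 1 holds ν resources of values x₁,…,x_ν and agent 2 holds a single resource of value S; then there exists a nonempty sub-allocation π' of π (with π'(a) ⊆ π(a) for each agent a) that is envy-free if and only if there exists I ⊆ [ν] with Σ_{i∈I} xᵢ = S. -/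
/-- Utility function of the Subset Sum reduction: agent 1 holds resources `Sum.inl i` of
value `x i`, agent 2 holds the single resource `Sum.inr ()` of value `S`. -/
def u6 {ν : ℕ} (S : ℕ) (x : Fin ν → ℕ) : (Fin ν ⊕ Unit) → ℕ :=
  Sum.elim x (fun _ => S)

/-- Initial allocation of the Subset Sum reduction. -/
def π6 (ν : ℕ) : Fin 2 → Finset (Fin ν ⊕ Unit) := fun a =>
  if a = 0 then Finset.univ.image Sum.inl else {Sum.inr ()}

lemma sum_image_inl {ν : ℕ} (S : ℕ) (x : Fin ν → ℕ) (I : Finset (Fin ν)) :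
    (I.image Sum.inl).sum (u6 S x) = ∑ i ∈ I, x i := by
  rw [Finset.sum_image (by intro a _ b _ h; exact Sum.inl_injective h)]
  rfl

/-- There is a nonempty envy-free sub-allocation of the constructed instance iff there is
a subset of the xᵢ summing to S. -/
theorem stmt6 (ν S : ℕ) (x : Fin ν → ℕ) (hx : ∀ i, 0 < x i) :
    (∃ π' : Fin 2 → Finset (Fin ν ⊕ Unit),
        (∀ a, π' a ⊆ π6 ν a) ∧
        (∃ a, (π' a).Nonempty) ∧
        (∀ a b : Fin 2, (π' b).sum (u6 S x) ≤ (π' a).sum (u6 S x))) ↔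
      (∃ I : Finset (Fin ν), ∑ i ∈ I, x i = S) := by
  constructor
  · rintro ⟨π', hsub, ⟨a, ha⟩, hef⟩
    have h01 : (π' 0).sum (u6 S x) = (π' 1).sum (u6 S x) :=
      le_antisymm (hef 1 0) (hef 0 1)
    have h0sub : π' 0 ⊆ Finset.univ.image Sum.inl := by
      have := hsub 0; simpa [π6] using this
    have h1sub : π' 1 ⊆ {Sum.inr ()} := by
      have := hsub 1; simpa [π6] using this
    have hrep : π' 0 = (Finset.univ.filter (fun i => Sum.inl i ∈ π' 0)).image Sum.inl := by
      ext e
      constructor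
      · intro he
        obtain ⟨i, _, rfl⟩ := Finset.mem_image.mp (h0sub he)
        exact Finset.mem_image.mpr ⟨i, Finset.mem_filter.mpr ⟨Finset.mem_univ i, he⟩, rfl⟩
      · intro he
        obtain ⟨i, hi, rfl⟩ := Finset.mem_image.mp he
        exact (Finset.mem_filter.mp hi).2
    rcases Finset.subset_singleton_iff.mp h1sub with h1 | h1
    · -- π' 1 empty: contradiction with nonemptiness
      exfalso
      have hz : (π' 0).sum (u6 S x) = 0 := by rw [h01, h1]; simp
      have h0e : π' 0 = ∅ := by
        by_contra hne
        obtain ⟨e, he⟩ := Finset.nonempty_iff_ne_empty.mpr hne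
        obtain ⟨i, _, rfl⟩ := Finset.mem_image.mp (h0sub he)
        have := Finset.sum_eq_zero_iff.mp hz _ he
        simp [u6] at this
        exact (hx i).ne' this
      have hall : ∀ b : Fin 2, π' b = ∅ := by
        intro b; fin_cases b
        · exact h0e
        · exact h1
      exact Finset.not_nonempty_empty (hall a ▸ ha)
    · refine ⟨Finset.univ.filter (fun i => Sum.inl i ∈ π' 0), ?_⟩
      have hS : (π' 1).sum (u6 S x) = S := by rw [h1]; simp [u6]
      rw [← sum_image_inl S x, ← hrep, h01, hS]
  · rintro ⟨I, hI⟩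
    refine ⟨fun a => if a = 0 then I.image Sum.inl else {Sum.inr ()}, ?_, ⟨1, ?_⟩, ?_⟩
    · intro a
      by_cases h : a = 0 <;> simp [h, π6, Finset.image_subset_image (Finset.subset_univ I)]
    · simp
    · have key : ∀ a : Fin 2,
        ((if a = 0 then I.image Sum.inl else {Sum.inr ()}) : Finset (Fin ν ⊕ Unit)).sum (u6 S x) = S := by
        intro a
        by_cases h : a = 0
        · simp [h, sum_image_inl S x I, hI]
        · simp [h, u6]
      intro a b; rw [key a, key b]
end

section
/- For identical additive valuations, an envy-free sub-allocation with target common utility t exists using at most k deleted resources if and only if t ≤ min_a u(π(a)) and for every agent a with u(π(a)) > t there is a set P_a ⊆ π(a) with u(P_a) = u(π(a)) − t, such that the minimal sizes of such sets sum to at most k; in particular, a sub-allocation π' of π is envy-free if and only if all agents have the same utility t under π'. -/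
/-- For identical additive valuations: an envy-free sub-allocation with common utility t
using at most k deleted resources exists iff t is at most every initial bundle utility and
there are per-agent deletion sets of value u(π(a)) − t whose minimal sizes sum to at most k.
Moreover, a sub-allocation is envy-free iff all agents have the same utility in it. -/
theorem stmt8 {A R : Type*} [Fintype A] [Nonempty A] [DecidableEq R]
    (u : R → ℕ) (π : A → Finset R)
    (hdisj : ∀ a b : A, a ≠ b → Disjoint (π a) (π b))
    (t k : ℕ) :
    ((∃ π' : A → Finset R,
        (∀ a, π' a ⊆ π a) ∧
        (∀ a : A, (π' a).sum u = t) ∧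
        (∀ a b : A, (π' b).sum u ≤ (π' a).sum u) ∧
        (∑ a : A, ((π a) \ (π' a)).card) ≤ k) ↔
      ((∀ a : A, t ≤ (π a).sum u) ∧
        ∃ P : A → Finset R,
          (∀ a, P a ⊆ π a) ∧
          (∀ a : A, (P a).sum u = (π a).sum u - t) ∧
          (∀ Q : A → Finset R, (∀ a, Q a ⊆ π a) →
            (∀ a : A, (Q a).sum u = (π a).sum u - t) →
            ∀ a : A, (P a).card ≤ (Q a).card) ∧
          (∑ a : A, (P a).card) ≤ k)) ∧
    (∀ π' : A → Finset R, (∀ a, π' a ⊆ π a) →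
      ((∀ a b : A, (π' b).sum u ≤ (π' a).sum u) ↔
        ∃ t' : ℕ, ∀ a : A, (π' a).sum u = t')) := by
  constructor
  · constructor
    · rintro ⟨π', hsub, ht, _, hk⟩
      have hle : ∀ a : A, t ≤ (π a).sum u := by
        intro a
        rw [← ht a]
        exact Finset.sum_le_sum_of_subset (hsub a)
      refine ⟨hle, ?_⟩
      -- set of candidate deletion sets
      have hmemS : ∀ a : A, (π a \ π' a) ∈
          (π a).powerset.filter (fun s => s.sum u = (π a).sum u - t) := by
        intro a
        simp only [Finset.mem_filter, Finset.mem_powerset]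
        constructor
        · exact Finset.sdiff_subset
        · have h : (π a \ π' a).sum u + (π' a).sum u = (π a).sum u :=
            Finset.sum_sdiff (hsub a)
          have hta := ht a
          omega
      have hexist : ∀ a : A, ∃ s ∈ (π a).powerset.filter
          (fun s => s.sum u = (π a).sum u - t),
          ∀ s' ∈ (π a).powerset.filter (fun s => s.sum u = (π a).sum u - t),
            s.card ≤ s'.card := by
        intro a
        obtain ⟨s, hs, hmin⟩ := Finset.exists_min_image
          ((π a).powerset.filter (fun s => s.sum u = (π a).sum u - t))
          Finset.card ⟨_, hmemS a⟩
        exact ⟨s, hs, hmin⟩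
      choose P hP hPmin using hexist
      have hPsub : ∀ a, P a ⊆ π a := by
        intro a
        have := hP a
        simp only [Finset.mem_filter, Finset.mem_powerset] at this
        exact this.1
      have hPsum : ∀ a, (P a).sum u = (π a).sum u - t := by
        intro a
        have := hP a
        simp only [Finset.mem_filter, Finset.mem_powerset] at this
        exact this.2
      refine ⟨P, hPsub, hPsum, ?_, ?_⟩
      · intro Q hQsub hQsum a
        apply hPmin a
        simp only [Finset.mem_filter, Finset.mem_powerset]
        exact ⟨hQsub a, hQsum a⟩
      · calc ∑ a : A, (P a).card ≤ ∑ a : A, (π a \ π' a).card := by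
              apply Finset.sum_le_sum
              intro a _
              exact hPmin a _ (hmemS a)
          _ ≤ k := hk
    · rintro ⟨hle, P, hPsub, hPsum, _, hk⟩
      refine ⟨fun a => π a \ P a, fun a => Finset.sdiff_subset, ?_, ?_, ?_⟩
      · intro a
        show (π a \ P a).sum u = t
        have h : (π a \ P a).sum u + (P a).sum u = (π a).sum u :=
          Finset.sum_sdiff (hPsub a)
        have := hPsum a
        have := hle a
        omega
      · intro a b
        show (π b \ P b).sum u ≤ (π a \ P a).sum u
        have ha : (π a \ P a).sum u + (P a).sum u = (π a).sum u :=
          Finset.sum_sdiff (hPsub a)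
        have hb : (π b \ P b).sum u + (P b).sum u = (π b).sum u :=
          Finset.sum_sdiff (hPsub b)
        have := hPsum a; have := hle a
        have := hPsum b; have := hle b
        omega
      · have : ∀ a : A, (π a \ (π a \ P a)).card = (P a).card := by
          intro a
          congr 1
          rw [Finset.sdiff_sdiff_self_left, Finset.inter_eq_right.mpr (hPsub a)]
        calc ∑ a : A, (π a \ (π a \ P a)).card
            = ∑ a : A, (P a).card := Finset.sum_congr rfl (fun a _ => this a)
          _ ≤ k := hk
  · intro π' hsub
    constructor
    · intro h
      obtain ⟨a0⟩ := ‹Nonempty A›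
      exact ⟨(π' a0).sum u, fun a => le_antisymm (h a0 a) (h a a0)⟩
    · rintro ⟨t', ht'⟩ a b
      rw [ht' a, ht' b]
end

section
/- In the Set Cover reduction instance, deleting a set R' of resources from the special agent's bundle yields an envy-free allocation if and only if every element agent values at least one resource of R' as one; consequently, there is an envy-free sub-allocation obtained by deleting at most z resources from the special agent's bundle if and only if the Set Cover instance (S, 𝒞, z) has a set cover of size at most z. -/
/-- Number of sets of the family (indexed by ι) containing element s. -/
def f9 {σ ι : Type*} [Fintype ι] [DecidableEq σ] (C : ι → Finset σ) (s : σ) : ℕ :=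
  (Finset.univ.filter (fun i => s ∈ C i)).card

/-- Utilities in the Set Cover reduction: agent `none` is the special agent a*,
agent `some s` is the element agent a_s. Resource `Sum.inl ⟨s,j⟩` is one of the
`f_s − 1` private resources of a_s; resource `Sum.inr i` is r_{C i}. -/
def u9 {σ ι : Type*} [Fintype ι] [DecidableEq σ] (C : ι → Finset σ) :
    Option σ → ((Σ s : σ, Fin (f9 C s - 1)) ⊕ ι) → ℕ
  | none, _ => 0
  | some s, Sum.inl p => if p.1 = s then 1 else 0
  | some s, Sum.inr i => if s ∈ C i then 1 else 0

/-- The allocation after deleting the resources `{r_C : C ∈ R'}` from a*'s bundle: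
a* keeps the remaining set resources, each element agent keeps its private resources. -/
def π9 {σ ι : Type*} [Fintype σ] [Fintype ι] [DecidableEq σ] [DecidableEq ι]
    (C : ι → Finset σ) (R' : Finset ι) :
    Option σ → Finset ((Σ s : σ, Fin (f9 C s - 1)) ⊕ ι)
  | none => (Finset.univ \ R').image Sum.inr
  | some s => Finset.univ.image (fun j : Fin (f9 C s - 1) => Sum.inl ⟨s, j⟩)

section aux
variable {σ ι : Type*} [Fintype σ] [Fintype ι] [DecidableEq σ] [DecidableEq ι]
  (C : ι → Finset σ) (R' : Finset ι)

lemma sum_none_agent (b : Option σ) : (π9 C R' b).sum (u9 C none) = 0 := by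
  simp [u9]

lemma sum_some_none (s : σ) :
    (π9 C R' none).sum (u9 C (some s))
      = ((Finset.univ \ R').filter (fun i => s ∈ C i)).card := by
  rw [show π9 C R' none = (Finset.univ \ R').image Sum.inr from rfl,
    Finset.sum_image (by intro a _ b _ h; exact Sum.inr.inj h)]
  rw [Finset.card_filter]
  rfl

lemma sum_some_some (s t : σ) :
    (π9 C R' (some t)).sum (u9 C (some s))
      = if t = s then f9 C t - 1 else 0 := by
  rw [show π9 C R' (some t)
        = Finset.univ.image (fun j : Fin (f9 C t - 1) => Sum.inl ⟨t, j⟩) from rfl,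
    Finset.sum_image (by
      intro a _ b _ h
      have := Sum.inl.inj h
      exact (Sigma.mk.inj_iff.mp this).2.eq)]
  by_cases h : t = s <;> simp [u9, h]

lemma filter_split (s : σ) :
    ((Finset.univ \ R').filter (fun i => s ∈ C i)).card
      + (R'.filter (fun i => s ∈ C i)).card = f9 C s := by
  rw [← Finset.card_union_of_disjoint, ← Finset.filter_union]
  · rw [Finset.sdiff_union_of_subset (Finset.subset_univ _)]; rfl
  · exact Finset.disjoint_filter_filter (Finset.sdiff_disjoint)

end aux

/-- Deleting R' from the special agent's bundle yields an envy-free allocation iff every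
element is covered by a set of R'; hence an envy-free allocation obtainable by deleting at
most z resources from a*'s bundle exists iff there is a set cover of size at most z. -/
theorem stmt9 {σ ι : Type*} [Fintype σ] [Fintype ι] [DecidableEq σ] [DecidableEq ι]
    (C : ι → Finset σ) (z : ℕ)
    (hf : ∀ s : σ, 0 < f9 C s) :
    (∀ R' : Finset ι,
      ((∀ a b : Option σ, (π9 C R' b).sum (u9 C a) ≤ (π9 C R' a).sum (u9 C a)) ↔
        (∀ s : σ, ∃ i ∈ R', s ∈ C i))) ∧
    ((∃ R' : Finset ι, R'.card ≤ z ∧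
        (∀ a b : Option σ, (π9 C R' b).sum (u9 C a) ≤ (π9 C R' a).sum (u9 C a))) ↔
      (∃ I : Finset ι, I.card ≤ z ∧ ∀ s : σ, ∃ i ∈ I, s ∈ C i)) := by
  have key : ∀ R' : Finset ι,
      ((∀ a b : Option σ, (π9 C R' b).sum (u9 C a) ≤ (π9 C R' a).sum (u9 C a)) ↔
        (∀ s : σ, ∃ i ∈ R', s ∈ C i)) := by
    intro R'
    constructor
    · intro h s
      have h1 := h (some s) none
      rw [sum_some_none, sum_some_some] at h1
      rw [if_pos rfl] at h1
      have hsplit := filter_split C R' s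
      have hfs := hf s
      have hpos : 0 < (R'.filter (fun i => s ∈ C i)).card := by omega
      obtain ⟨i, hi⟩ := Finset.card_pos.mp hpos
      rw [Finset.mem_filter] at hi
      exact ⟨i, hi.1, hi.2⟩
    · intro h a b
      match a, b with
      | none, b => rw [sum_none_agent, sum_none_agent]
      | some s, none =>
        rw [sum_some_none, sum_some_some]
        rw [if_pos rfl]
        have hsplit := filter_split C R' s
        obtain ⟨i, hiR, hiC⟩ := h s
        have : 0 < (R'.filter (fun i => s ∈ C i)).card :=
          Finset.card_pos.mpr ⟨i, Finset.mem_filter.mpr ⟨hiR, hiC⟩⟩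
        omega
      | some s, some t =>
        rw [sum_some_some, sum_some_some]
        rw [if_pos rfl]
        by_cases ht : t = s
        · subst ht; simp
        · simp [ht]
  refine ⟨key, ?_, ?_⟩
  · rintro ⟨R', hc, hEF⟩; exact ⟨R', hc, (key R').mp hEF⟩
  · rintro ⟨I, hc, hcov⟩; exact ⟨I, hc, (key I).mpr hcov⟩
end

section
/- In the fixed-point algorithm for maximum-welfare envy-free sub-allocations, maximality is preserved: suppose π₁ is a sub-allocation of π₀ that is maximal, i.e., for every envy-free sub-allocation π' of π₀ and every agent a, u_a(π₁(a)) ≥ u_a(π'(a)). Let b be an agent envied by some agent in π₁, and let π₂ agree with π₁ except π₂(b) = S_b, where S_b ⊆ π₀(b) is a subset of maximum utility u_b(S_b) such that no agent envies b when b's bundle is S_b and all other bundles are as in π₁. Then π₂ is also maximal. -/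
/-- Maximality is preserved by one step of the fixed-point algorithm for maximum-welfare
envy-free sub-allocations: if π₁ is maximal and b's bundle is replaced by a maximum-value
subset S_b ⊆ π₀(b) towards which no agent is envious, the result is again maximal. -/
theorem stmt12 {A R : Type*} [Fintype A] [DecidableEq A] [DecidableEq R]
    (u : A → R → ℕ) (π0 : A → Finset R)
    (hdisj : ∀ a b : A, a ≠ b → Disjoint (π0 a) (π0 b))
    (π1 : A → Finset R) (hsub1 : ∀ a, π1 a ⊆ π0 a)
    -- π₁ is maximal
    (hmax1 : ∀ π' : A → Finset R, (∀ a, π' a ⊆ π0 a) →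
      (∀ a c : A, (π' c).sum (u a) ≤ (π' a).sum (u a)) →
      ∀ a, (π' a).sum (u a) ≤ (π1 a).sum (u a))
    -- b is envied by some agent in π₁
    (b : A) (hb : ∃ a : A, (π1 a).sum (u a) < (π1 b).sum (u a))
    (Sb : Finset R) (hSbsub : Sb ⊆ π0 b)
    -- with b's bundle replaced by S_b, no agent envies b
    (hnoenvy : ∀ a : A, Sb.sum (u a) ≤ (Function.update π1 b Sb a).sum (u a))
    -- S_b has maximum utility for b among such subsets of π₀(b)
    (hopt : ∀ T : Finset R, T ⊆ π0 b →
      (∀ a : A, T.sum (u a) ≤ (Function.update π1 b T a).sum (u a)) →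
      T.sum (u b) ≤ Sb.sum (u b)) :
    -- then π₂ = update π₁ b S_b is maximal
    ∀ π' : A → Finset R, (∀ a, π' a ⊆ π0 a) →
      (∀ a c : A, (π' c).sum (u a) ≤ (π' a).sum (u a)) →
      ∀ a, (π' a).sum (u a) ≤ (Function.update π1 b Sb a).sum (u a) := by
  intro π' hsub' hef a
  by_cases ha : a = b
  · subst ha
    rw [Function.update_self]
    apply hopt (π' a) (hsub' a)
    intro c
    by_cases hc : c = a
    · subst hc; rw [Function.update_self]
    · rw [Function.update_of_ne hc]
      exact le_trans (hef c a) (hmax1 π' hsub' hef c)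
  · rw [Function.update_of_ne ha]
    exact hmax1 π' hsub' hef a
end

section
/- In the Independent Set reduction for EF1 donation, the special agent's surviving vertex resources form an independent set: given graph G = (V,E), edge agents a_e for each e ∈ E, a special agent a* holding a resource r_v for each v ∈ V where u_{a_e}(r_v) = 1 iff v is an endpoint of e (and all other utilities are 0), a sub-allocation keeping exactly the resources {r_v : v ∈ V'} with the special agent is EF1 if and only if V' is an independent set in G. In particular, G has an independent set of size t iff there is an EF1 sub-allocation keeping at least t resources. -/
/-- Utilities of the Independent Set reduction for EF1: agent `none` is the special agent
a* (valuing everything 0), agent `some e` is the edge agent a_e valuing vertex resource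
r_v as 1 iff v is an endpoint of e. -/
def u14 {V : Type*} [DecidableEq V] (G : SimpleGraph V) :
    Option {e : Sym2 V // e ∈ G.edgeSet} → V → ℕ
  | none, _ => 0
  | some e, v => if v ∈ (e : Sym2 V) then 1 else 0

/-- The sub-allocation keeping exactly the vertex resources of V' with the special agent
(edge agents hold nothing). -/
def σ14 {V : Type*} (G : SimpleGraph V) (V' : Finset V) :
    Option {e : Sym2 V // e ∈ G.edgeSet} → Finset V
  | none => V'
  | some _ => ∅

lemma key14 {V : Type*} [Fintype V] [DecidableEq V]
    (G : SimpleGraph V) [DecidableRel G.Adj] (V' : Finset V) :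
    ((∀ a b : Option {e : Sym2 V // e ∈ G.edgeSet}, a ≠ b →
        ¬ ((σ14 G V' b).Nonempty ∧
          ∀ r ∈ σ14 G V' b,
            (σ14 G V' a).sum (u14 G a) < ((σ14 G V' b).erase r).sum (u14 G a))) ↔
      (∀ v ∈ V', ∀ w ∈ V', ¬ G.Adj v w)) := by
  constructor
  · intro h v hv w hw hadj
    have hvw : v ≠ w := G.ne_of_adj hadj
    have he : s(v, w) ∈ G.edgeSet := hadj
    apply h (some ⟨s(v, w), he⟩) none (by simp)
    refine ⟨⟨v, hv⟩, ?_⟩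
    intro r hr
    simp only [σ14, u14, Finset.sum_empty]
    have : ∃ z ∈ V'.erase r, z ∈ s(v, w) := by
      by_cases hrv : r = v
      · exact ⟨w, Finset.mem_erase.2 ⟨by simp [hrv, hvw.symm], hw⟩, by simp⟩
      · exact ⟨v, Finset.mem_erase.2 ⟨fun h' => hrv h'.symm, hv⟩, by simp⟩
    obtain ⟨z, hz, hze⟩ := this
    calc (0 : ℕ) < 1 := Nat.zero_lt_one
      _ = (if z ∈ s(v, w) then 1 else 0) := by simp [hze]
      _ ≤ _ := Finset.single_le_sum (f := fun z => if z ∈ s(v, w) then 1 else 0)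
          (fun _ _ => Nat.zero_le _) hz
  · rintro hind a b hab ⟨hne, hall⟩
    match b with
    | some e => exact absurd hne (by simp [σ14])
    | none =>
    match a with
    | none => exact hab rfl
    | some e =>
    obtain ⟨e, he⟩ := e
    revert hall hab
    induction e using Sym2.ind with
    | _ x y =>
      intro hab hall
      have hadj : G.Adj x y := he
      have hxy : ¬ (x ∈ V' ∧ y ∈ V') := fun ⟨hx, hy⟩ => hind x hx y hy hadj
      have hzero : ∀ r : V, (x ∉ V'.erase r) → (y ∉ V'.erase r) →
          ¬ ((σ14 G V' (some ⟨s(x,y), he⟩)).sum (u14 G (some ⟨s(x,y), he⟩)) <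
            ((σ14 G V' none).erase r).sum (u14 G (some ⟨s(x,y), he⟩))) := by
        intro r hx' hy'
        simp only [σ14, u14, Finset.sum_empty]
        have : ∑ z ∈ V'.erase r, (if z ∈ s(x, y) then 1 else 0) = 0 := by
          apply Finset.sum_eq_zero
          intro z hz
          have : z ≠ x ∧ z ≠ y := ⟨fun h => hx' (h ▸ hz), fun h => hy' (h ▸ hz)⟩
          simp [Sym2.mem_iff, this.1, this.2]
        have h0 : (V'.erase r).sum (u14 G (some ⟨s(x, y), he⟩)) = 0 := this
        omega
      by_cases hx : x ∈ V'
      · have hy : y ∉ V' := fun hy => hxy ⟨hx, hy⟩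
        exact hzero x (by simp) (by simp [hy]) (hall x hx)
      · by_cases hy : y ∈ V'
        · exact hzero y (by simp [hx]) (by simp) (hall y hy)
        · obtain ⟨r, hr⟩ := hne
          exact hzero r (by simp [hx]) (by simp [hy]) (hall r hr)

/-- Keeping the vertex resources V' with the special agent is EF1 iff V' is an independent
set; consequently G has an independent set of size at least t iff there is an EF1
sub-allocation keeping at least t resources. -/
theorem stmt14 {V : Type*} [Fintype V] [DecidableEq V]
    (G : SimpleGraph V) [DecidableRel G.Adj] (t : ℕ) :
    (∀ V' : Finset V,
      ((∀ a b : Option {e : Sym2 V // e ∈ G.edgeSet}, a ≠ b →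
          ¬ ((σ14 G V' b).Nonempty ∧
            ∀ r ∈ σ14 G V' b,
              (σ14 G V' a).sum (u14 G a) < ((σ14 G V' b).erase r).sum (u14 G a))) ↔
        (∀ v ∈ V', ∀ w ∈ V', ¬ G.Adj v w))) ∧
    ((∃ V' : Finset V, t ≤ V'.card ∧
        (∀ a b : Option {e : Sym2 V // e ∈ G.edgeSet}, a ≠ b →
          ¬ ((σ14 G V' b).Nonempty ∧
            ∀ r ∈ σ14 G V' b,
              (σ14 G V' a).sum (u14 G a) < ((σ14 G V' b).erase r).sum (u14 G a)))) ↔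
      (∃ V' : Finset V, t ≤ V'.card ∧ ∀ v ∈ V', ∀ w ∈ V', ¬ G.Adj v w)) := by
  refine ⟨fun V' => key14 G V', ?_⟩
  constructor
  · rintro ⟨V', h1, h2⟩; exact ⟨V', h1, (key14 G V').1 h2⟩
  · rintro ⟨V', h1, h2⟩; exact ⟨V', h1, (key14 G V').2 h2⟩
end

section
/- In the cubic-graph Independent Set reduction for EF donation, any envy-free nonempty sub-allocation must keep every edge resource: if in sub-allocation π' some edge agent a_{e_i} keeps its resource r_{e_i}, then (since a_{e_{i−1 mod q}} values r_{e_i} as 1 and would otherwise envy a_{e_i}) agent a_{e_{i−1 mod q}} must also keep its resource, and by induction all q edge agents keep their resources; moreover if any vertex resource r_v survives with the special agent, then every edge agent a_e with v ∈ e must keep r_e. -/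
lemma aux15_sub_one_val (q : ℕ) [NeZero q] (j : Fin q) :
    ((j - 1 : Fin q).val + 1) % q = j.val := by
  have hq : 0 < q := Fin.pos j
  have hj := j.isLt
  rw [Fin.sub_def]
  simp only [Fin.val_one']
  show ((q - 1 % q + j.val) % q + 1) % q = j.val
  have h1 : 1 % q = 1 ∨ (q = 1 ∧ 1 % q = 0) := by
    rcases Nat.eq_or_lt_of_le hq with h | h
    · right; exact ⟨h.symm, by rw [← h]⟩
    · left; exact Nat.mod_eq_of_lt h
  rcases h1 with h1 | ⟨hq1, h1⟩
  · rw [h1]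
    rcases Nat.eq_zero_or_pos j.val with hj0 | hj0
    · rw [hj0]
      have key : (q - 1 + 0) % q = q - 1 := by
        rw [Nat.add_zero]; exact Nat.mod_eq_of_lt (by omega)
      rw [key, Nat.sub_add_cancel hq, Nat.mod_self]
    · have key : (q - 1 + j.val) % q = j.val - 1 := by
        rw [show q - 1 + j.val = q + (j.val - 1) by omega, Nat.add_mod_left]
        exact Nat.mod_eq_of_lt (by omega)
      rw [key, show j.val - 1 + 1 = j.val by omega]
      exact Nat.mod_eq_of_lt hj
  · subst hq1
    simp [Nat.mod_one]


/-- Utilities of the cubic-graph Independent Set reduction for EF donation: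
agent `none` is the special agent a*, valuing each vertex resource `Sum.inl v` as 1 and
each edge resource `Sum.inr i` as t; edge agent `some i` values `Sum.inl v` as 1 iff
v ∈ e i, and `Sum.inr j` as 1 iff j = i or j = i + 1 (mod q), i.e. iff i ∈ {j, j−1 mod q}. -/
def u15 {V : Type*} [DecidableEq V] (q t : ℕ) (e : Fin q → Sym2 V) :
    Option (Fin q) → (V ⊕ Fin q) → ℕ
  | none, Sum.inl _ => 1
  | none, Sum.inr _ => t
  | some i, Sum.inl v => if v ∈ e i then 1 else 0
  | some i, Sum.inr j => if j = i ∨ (i.val + 1) % q = j.val then 1 else 0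

/-- Initial allocation of the cubic-graph reduction: a* holds all vertex resources, each
edge agent a_{e_i} holds its resource r_{e_i}. -/
def π15 (V : Type*) [Fintype V] [DecidableEq V] (q : ℕ) : Option (Fin q) → Finset (V ⊕ Fin q)
  | none => Finset.univ.image Sum.inl
  | some i => {Sum.inr i}

/-- In any envy-free sub-allocation of the cubic-graph reduction instance: if some edge
agent keeps its resource then every edge agent keeps its resource; and if a vertex
resource r_v survives with the special agent, then every edge agent of an edge incident
to v keeps its resource. -/
theorem stmt15 {V : Type*} [Fintype V] [DecidableEq V]
    (G : SimpleGraph V) [DecidableRel G.Adj]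
    (q t : ℕ) (hq : 0 < q) (ht : 1 ≤ t)
    (e : Fin q → Sym2 V) (he : ∀ i, e i ∈ G.edgeSet)
    (hdeg : ∀ v : V, G.degree v = 3)
    (π' : Option (Fin q) → Finset (V ⊕ Fin q))
    (hsub : ∀ a, π' a ⊆ π15 V q a)
    (hEF : ∀ a b : Option (Fin q),
      (π' b).sum (u15 q t e a) ≤ (π' a).sum (u15 q t e a)) :
    ((∃ i : Fin q, Sum.inr i ∈ π' (some i)) →
      ∀ j : Fin q, Sum.inr j ∈ π' (some j)) ∧
    (∀ v : V, Sum.inl v ∈ π' none →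
      ∀ i : Fin q, v ∈ e i → Sum.inr i ∈ π' (some i)) := by
  haveI : NeZero q := ⟨hq.ne'⟩
  have hne : ∀ j : Fin q, (π' (some j)).Nonempty → Sum.inr j ∈ π' (some j) := by
    rintro j ⟨x, hx⟩
    have h := hsub (some j) hx
    simp only [π15, Finset.mem_singleton] at h
    subst h; exact hx
  have hpos : ∀ j : Fin q, ∀ a, 1 ≤ (π' (some j)).sum (u15 q t e a) →
      Sum.inr j ∈ π' (some j) := by
    intro j a h
    apply hne
    by_contra hc
    rw [Finset.not_nonempty_iff_eq_empty] at hc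
    simp [hc] at h
  have step : ∀ j : Fin q, Sum.inr j ∈ π' (some j) →
      Sum.inr (j - 1) ∈ π' (some (j - 1)) := by
    intro j hj
    have hsj : π' (some j) = {Sum.inr j} :=
      Finset.Subset.antisymm (hsub (some j)) (Finset.singleton_subset_iff.mpr hj)
    have h := hEF (some (j - 1)) (some j)
    rw [hsj, Finset.sum_singleton] at h
    have hu : u15 q t e (some (j - 1)) (Sum.inr j) = 1 := by
      simp [u15, aux15_sub_one_val q j]
    rw [hu] at h
    exact hpos _ _ h
  constructor
  · rintro ⟨i, hi⟩ j
    open Fin.NatCast Fin.CommRing in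
    have key : ∀ n : ℕ, Sum.inr (i - (n : Fin q)) ∈ π' (some (i - (n : Fin q))) := by
      intro n
      induction n with
      | zero => simpa using hi
      | succ n ih =>
        have := step _ ih
        have hcast : ((n + 1 : ℕ) : Fin q) = (n : Fin q) + 1 := by push_cast; ring
        rw [hcast, show i - ((n : Fin q) + 1) = i - (n : Fin q) - 1 by ring]
        exact this
    have := key (i - j).val
    rwa [Fin.cast_val_eq_self, sub_sub_cancel] at this
  · intro v hv i hvi
    have h := hEF (some i) none
    have h1 : 1 ≤ (π' none).sum (u15 q t e (some i)) := by
      calc 1 = u15 q t e (some i) (Sum.inl v) := by simp [u15, hvi]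
        _ ≤ _ := Finset.single_le_sum (f := u15 q t e (some i)) (by intros; positivity) hv
    exact hpos _ _ (le_trans h1 h)
end

section
/- For identical additive valuations where some agent's initial bundle has utility zero, the maximum-welfare EF1 sub-allocation assigns each agent at most one resource of positive value; in particular, a sub-allocation π' with every bundle containing at most one positive-value resource, and each agent keeping one of its most valuable resources, is EF1 and has maximum utilitarian welfare among all EF1 sub-allocations. -/
/-- For identical additive valuations with minimum initial bundle utility zero:
every EF1 sub-allocation gives each agent at most one resource of positive value, and any
sub-allocation giving each agent at most one positive-value resource including one of its
most valuable resources is EF1 of maximum utilitarian welfare among EF1 sub-allocations. -/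
theorem stmt19 {A R : Type*} [Fintype A] [DecidableEq R]
    (u : R → ℕ) (π : A → Finset R)
    (hdisj : ∀ a b : A, a ≠ b → Disjoint (π a) (π b))
    (hzero : ∃ a : A, (π a).sum u = 0) :
    (∀ π'' : A → Finset R, (∀ a, π'' a ⊆ π a) →
      (∀ a b : A, a ≠ b →
        ¬ ((π'' b).Nonempty ∧ ∀ r ∈ π'' b, (π'' a).sum u < ((π'' b).erase r).sum u)) →
      ∀ a : A, ((π'' a).filter (fun r => 0 < u r)).card ≤ 1) ∧
    (∀ π' : A → Finset R, (∀ a, π' a ⊆ π a) →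
      (∀ a : A, ((π' a).filter (fun r => 0 < u r)).card ≤ 1) →
      (∀ a : A, (π a).Nonempty → ∃ r ∈ π' a, ∀ r' ∈ π a, u r' ≤ u r) →
      (∀ a b : A, a ≠ b →
        ¬ ((π' b).Nonempty ∧ ∀ r ∈ π' b, (π' a).sum u < ((π' b).erase r).sum u)) ∧
      (∀ π'' : A → Finset R, (∀ a, π'' a ⊆ π a) →
        (∀ a b : A, a ≠ b →
          ¬ ((π'' b).Nonempty ∧ ∀ r ∈ π'' b, (π'' a).sum u < ((π'' b).erase r).sum u)) →
        (∑ a : A, (π'' a).sum u) ≤ ∑ a : A, (π' a).sum u)) := by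
  obtain ⟨a0, ha0⟩ := hzero
  have hz : ∀ r ∈ π a0, u r = 0 := fun r hr => (Finset.sum_eq_zero_iff).mp ha0 r hr
  have part1 : ∀ π'' : A → Finset R, (∀ a, π'' a ⊆ π a) →
      (∀ a b : A, a ≠ b →
        ¬ ((π'' b).Nonempty ∧ ∀ r ∈ π'' b, (π'' a).sum u < ((π'' b).erase r).sum u)) →
      ∀ a : A, ((π'' a).filter (fun r => 0 < u r)).card ≤ 1 := by
    intro π'' hsub hef1 a
    by_cases ha : a = a0
    · subst ha
      have hfe : (π'' a).filter (fun r => 0 < u r) = ∅ := by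
        apply Finset.filter_eq_empty_iff.mpr
        intro r hr
        simp [hz r (hsub a hr)]
      simp [hfe]
    · by_contra hc
      push_neg at hc
      obtain ⟨r1, hr1, r2, hr2, hne⟩ := Finset.one_lt_card.mp hc
      have hsum0 : (π'' a0).sum u = 0 :=
        Finset.sum_eq_zero (fun r hr => hz r (hsub a0 hr))
      apply hef1 a0 a (Ne.symm ha)
      refine ⟨⟨r1, (Finset.mem_filter.mp hr1).1⟩, ?_⟩
      intro r hr
      rw [hsum0]
      rcases eq_or_ne r1 r with h | h
      · have hmem : r2 ∈ (π'' a).erase r :=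
          Finset.mem_erase.mpr ⟨by rw [← h]; exact hne.symm, (Finset.mem_filter.mp hr2).1⟩
        exact lt_of_lt_of_le (Finset.mem_filter.mp hr2).2
          (Finset.single_le_sum (fun _ _ => Nat.zero_le _) hmem)
      · have hmem : r1 ∈ (π'' a).erase r :=
          Finset.mem_erase.mpr ⟨h, (Finset.mem_filter.mp hr1).1⟩
        exact lt_of_lt_of_le (Finset.mem_filter.mp hr1).2
          (Finset.single_le_sum (fun _ _ => Nat.zero_le _) hmem)
  refine ⟨part1, ?_⟩
  intro π' hsub h1 hmax
  constructor
  · rintro a b hab ⟨hne, hall⟩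
    -- find r ∈ π' b with erase sum zero
    have key : ∃ r ∈ π' b, ((π' b).erase r).sum u = 0 := by
      by_cases hp : ∃ r ∈ π' b, 0 < u r
      · obtain ⟨r0, hr0, hpos⟩ := hp
        refine ⟨r0, hr0, Finset.sum_eq_zero ?_⟩
        intro r hr
        obtain ⟨hne', hmem⟩ := Finset.mem_erase.mp hr
        by_contra hnz
        have h2 : 1 < ((π' b).filter (fun r => 0 < u r)).card :=
          Finset.one_lt_card.mpr
            ⟨r, Finset.mem_filter.mpr ⟨hmem, Nat.pos_of_ne_zero hnz⟩,
             r0, Finset.mem_filter.mpr ⟨hr0, hpos⟩, hne'⟩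
        exact absurd (h1 b) (by omega)
      · push_neg at hp
        obtain ⟨r0, hr0⟩ := hne
        refine ⟨r0, hr0, Finset.sum_eq_zero ?_⟩
        intro r hr
        have := hp r (Finset.mem_erase.mp hr).2
        omega
    obtain ⟨r0, hr0, hz0⟩ := key
    have := hall r0 hr0
    rw [hz0] at this
    exact Nat.not_lt_zero _ this
  · intro π'' hsub'' hef''
    apply Finset.sum_le_sum
    intro a _
    have hcard := part1 π'' hsub'' hef'' a
    by_cases hne : (π a).Nonempty
    · obtain ⟨rm, hrm, hrmax⟩ := hmax a hne
      have hstep : (π'' a).sum u ≤ u rm := by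
        have heq : ((π'' a).filter (fun r => 0 < u r)).sum u = (π'' a).sum u :=
          Finset.sum_filter_of_ne (fun x _ hx => Nat.pos_of_ne_zero hx)
        have hb : ((π'' a).filter (fun r => 0 < u r)).sum u ≤
            ((π'' a).filter (fun r => 0 < u r)).card * u rm := by
          calc ((π'' a).filter (fun r => 0 < u r)).sum u
              ≤ ((π'' a).filter (fun r => 0 < u r)).card • u rm :=
                Finset.sum_le_card_nsmul _ _ _
                  (fun x hx => hrmax x (hsub'' a (Finset.mem_filter.mp hx).1))
            _ = _ := by simp [Nat.smul_one_eq_cast]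
        rw [← heq]
        calc ((π'' a).filter (fun r => 0 < u r)).sum u
            ≤ ((π'' a).filter (fun r => 0 < u r)).card * u rm := hb
          _ ≤ 1 * u rm := Nat.mul_le_mul_right _ hcard
          _ = u rm := one_mul _
      exact le_trans hstep
        (Finset.single_le_sum (fun _ _ => Nat.zero_le _) hrm)
    · have : π'' a = ∅ := Finset.subset_empty.mp
        (by rw [← Finset.not_nonempty_iff_eq_empty.mp hne]; exact hsub'' a)
      simp [this]
end
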